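/- arXiv:1807.04536 — 9 statements merged into one kernel-verified Lean document; each statement's English description precedes it below -/
import Mathlib

section
/- Let A be an n×n hidden Z-matrix, witnessed by Z-matrices X, Y with AX = Y and nonnegative vectors r, s with rᵀX + sᵀY > 0. Then X is nonsingular. -/
open Matrix

/-- A Z-matrix: all off-diagonal entries are nonpositive. -/
def IsZMatrix {ι : Type*} [Fintype ι] [DecidableEq ι] (A : Matrix ι ι ℝ) : Prop :=
  ∀ i j, i ≠ j → A i j ≤ 0

/-- A hidden Z-matrix: AX = Y for Z-matrices X, Y, with rᵀX + sᵀY > 0 for some r, s ≥ 0. -/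
def IsHiddenZ {ι : Type*} [Fintype ι] [DecidableEq ι] (A : Matrix ι ι ℝ) : Prop :=
  ∃ X Y : Matrix ι ι ℝ, ∃ r s : ι → ℝ,
    IsZMatrix X ∧ IsZMatrix Y ∧ A * X = Y ∧
    (∀ i, 0 ≤ r i) ∧ (∀ i, 0 ≤ s i) ∧
    (∀ j, 0 < (Matrix.vecMul r X + Matrix.vecMul s Y) j)

/-- The principal minor of `A` indexed by `α`. -/
def principalMinor {ι : Type*} [Fintype ι] [DecidableEq ι] (A : Matrix ι ι ℝ)
    (α : Finset ι) : ℝ :=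
  (A.submatrix (fun i : {x // x ∈ α} => (i : ι)) (fun j : {x // x ∈ α} => (j : ι))).det

/-- If `M` is a Z-matrix, `v ≥ 0` and `v i = 0`, then `(M v) i ≤ 0`. -/
lemma zmatrix_mulVec_nonpos {n : ℕ} (M : Matrix (Fin n) (Fin n) ℝ)
    (hM : IsZMatrix M) (v : Fin n → ℝ) (hv : ∀ j, 0 ≤ v j) (i : Fin n)
    (hvi : v i = 0) : M.mulVec v i ≤ 0 := by
  rw [Matrix.mulVec, dotProduct]
  apply Finset.sum_nonpos
  intro j _
  rcases eq_or_ne j i with rfl | hj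
  · simp [hvi]
  · exact mul_nonpos_of_nonpos_of_nonneg (hM i j (Ne.symm hj)) (hv j)

/-- If `M` is a Z-matrix and `M z = 0`, then `M z⁺ ≤ 0` componentwise. -/
lemma zmatrix_mulVec_posPart_nonpos {n : ℕ} (M : Matrix (Fin n) (Fin n) ℝ)
    (hM : IsZMatrix M) (z : Fin n → ℝ) (hz : M.mulVec z = 0) (i : Fin n) :
    M.mulVec (fun j => max (z j) 0) i ≤ 0 := by
  rcases le_or_gt (z i) 0 with h | h
  · exact zmatrix_mulVec_nonpos M hM _ (fun j => le_max_right _ _) i (max_eq_right h)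
  · have hsplit : (fun j => max (z j) 0) = z + fun j => max (-z j) 0 := by
      funext j
      rcases le_or_gt (z j) 0 with h' | h'
      · simp [max_eq_right h', max_eq_left (by linarith : (0:ℝ) ≤ -z j)]
      · simp [max_eq_left h'.le, max_eq_right (by linarith : -z j ≤ 0)]
    rw [hsplit, Matrix.mulVec_add, Pi.add_apply, hz, Pi.zero_apply, zero_add]
    exact zmatrix_mulVec_nonpos M hM _ (fun j => le_max_right _ _) i
      (max_eq_right (by linarith))

/-- Positive part of the kernel vector vanishes. -/
lemma kernel_posPart_eq_zero {n : ℕ} (X Y : Matrix (Fin n) (Fin n) ℝ)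
    (r s : Fin n → ℝ) (hX : IsZMatrix X) (hY : IsZMatrix Y)
    (hr : ∀ i, 0 ≤ r i) (hs : ∀ i, 0 ≤ s i)
    (hpos : ∀ j, 0 < (Matrix.vecMul r X + Matrix.vecMul s Y) j)
    (z : Fin n → ℝ) (hXz : X.mulVec z = 0) (hYz : Y.mulVec z = 0) :
    ∀ j, max (z j) 0 = 0 := by
  set p : Fin n → ℝ := fun j => max (z j) 0 with hp
  have hp0 : ∀ j, 0 ≤ p j := fun j => le_max_right _ _
  have hXp : ∀ i, X.mulVec p i ≤ 0 := zmatrix_mulVec_posPart_nonpos X hX z hXz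
  have hYp : ∀ i, Y.mulVec p i ≤ 0 := zmatrix_mulVec_posPart_nonpos Y hY z hYz
  have hsum : ∑ j, (Matrix.vecMul r X + Matrix.vecMul s Y) j * p j ≤ 0 := by
    have h1 : ∑ j, (Matrix.vecMul r X + Matrix.vecMul s Y) j * p j
        = r ⬝ᵥ X.mulVec p + s ⬝ᵥ Y.mulVec p := by
      rw [Matrix.dotProduct_mulVec, Matrix.dotProduct_mulVec]
      simp [dotProduct, add_mul, Finset.sum_add_distrib]
    rw [h1]
    have h2 : r ⬝ᵥ X.mulVec p ≤ 0 :=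
      Finset.sum_nonpos fun i _ => mul_nonpos_of_nonneg_of_nonpos (hr i) (hXp i)
    have h3 : s ⬝ᵥ Y.mulVec p ≤ 0 :=
      Finset.sum_nonpos fun i _ => mul_nonpos_of_nonneg_of_nonpos (hs i) (hYp i)
    linarith
  have hterm : ∀ j ∈ Finset.univ, 0 ≤ (Matrix.vecMul r X + Matrix.vecMul s Y) j * p j :=
    fun j _ => mul_nonneg (hpos j).le (hp0 j)
  have hzero : ∑ j, (Matrix.vecMul r X + Matrix.vecMul s Y) j * p j = 0 :=
    le_antisymm hsum (Finset.sum_nonneg hterm)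
  intro j
  have := (Finset.sum_eq_zero_iff_of_nonneg hterm).mp hzero j (Finset.mem_univ j)
  rcases mul_eq_zero.mp this with h | h
  · exact absurd h (ne_of_gt (hpos j))
  · exact h

theorem hiddenZ_X_nonsingular {n : ℕ} (A X Y : Matrix (Fin n) (Fin n) ℝ)
    (r s : Fin n → ℝ) (hX : IsZMatrix X) (hY : IsZMatrix Y) (hAXY : A * X = Y)
    (hr : ∀ i, 0 ≤ r i) (hs : ∀ i, 0 ≤ s i)
    (hpos : ∀ j, 0 < (Matrix.vecMul r X + Matrix.vecMul s Y) j) :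
    X.det ≠ 0 := by
  intro hdet
  obtain ⟨z, hz0, hXz⟩ := (Matrix.exists_mulVec_eq_zero_iff).mpr hdet
  have hYz : Y.mulVec z = 0 := by
    rw [← hAXY, ← Matrix.mulVec_mulVec, hXz, Matrix.mulVec_zero]
  have hXz' : X.mulVec (-z) = 0 := by rw [Matrix.mulVec_neg, hXz, neg_zero]
  have hYz' : Y.mulVec (-z) = 0 := by rw [Matrix.mulVec_neg, hYz, neg_zero]
  have hpz := kernel_posPart_eq_zero X Y r s hX hY hr hs hpos z hXz hYz
  have hnz := kernel_posPart_eq_zero X Y r s hX hY hr hs hpos (-z) hXz' hYz'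
  apply hz0
  funext j
  have h1 := hpz j
  have h2 := hnz j
  simp only [Pi.neg_apply] at h2
  rcases le_or_gt (z j) 0 with h | h
  · have : -z j ≤ 0 := by
      by_contra hc
      push_neg at hc
      rw [max_eq_left hc.le] at h2
      linarith
    simpa using le_antisymm h (by linarith)
  · rw [max_eq_left h.le] at h1; exact h1.symm ▸ rfl
end

section
/- Let A be an n×n hidden Z-matrix. If there exists a vector x > 0 (all entries strictly positive) such that Ax ≥ 0 (componentwise), then A is a P₀-matrix, i.e., all principal minors of A are nonnegative. -/
open Matrix

/-!
It suffices that `A` strictly reverses the sign of no nonzero vector: if a principal submatrix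
`B` had `det B < 0`, then `det (B + t • 1)`, a monic polynomial in `t`, would vanish at some
`t > 0`, and a kernel vector of `B + t • 1`, extended by zero, would be strictly sign-reversed.

For a hidden Z-matrix, the Z-matrix property turns `r, s ≥ 0` with `rᵀX + sᵀY > 0` into the
implication `Xw ≥ 0 ∧ Yw ≥ 0 → w ≥ 0`, which makes `X` invertible and `x = Xp` with `p > 0`.
Writing `z = Xu` with `u` having a positive entry (up to replacing `z` by `-z`), scale `p` until
it touches `u` from above at some index `i`; since `X` and `Y = AX` are Z-matrices this gives
`zᵢ > 0` and `(Az)ᵢ ≥ 0`.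
-/

section ZMatrix

variable {ι : Type*} [Fintype ι] [DecidableEq ι] {M : Matrix ι ι ℝ}

theorem IsZMatrix.mulVec_apply_le (hM : IsZMatrix M) {v w : ι → ℝ} {i : ι} (hle : v ≤ w)
    (heq : v i = w i) : (M *ᵥ w) i ≤ (M *ᵥ v) i := by
  refine Finset.sum_le_sum fun j _ => ?_
  rcases eq_or_ne i j with rfl | hij
  · rw [heq]
  · exact mul_le_mul_of_nonpos_left (hle j) (hM i j hij)

theorem IsZMatrix.mulVec_inf_zero_nonneg (hM : IsZMatrix M) {w : ι → ℝ} (hw : 0 ≤ M *ᵥ w) :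
    0 ≤ M *ᵥ (w ⊓ 0) := by
  intro i
  rcases le_total (w i) 0 with hi | hi
  · exact (hw i).trans (hM.mulVec_apply_le inf_le_left (inf_of_le_left hi))
  · simpa using hM.mulVec_apply_le (w := 0) inf_le_right (inf_of_le_right hi)

end ZMatrix

section HiddenZ

variable {ι : Type*} [Fintype ι] [DecidableEq ι] {X Y : Matrix ι ι ℝ} {r s : ι → ℝ}

theorem nonneg_of_mulVec_nonneg (hX : IsZMatrix X) (hY : IsZMatrix Y) (hr : 0 ≤ r) (hs : 0 ≤ s)
    (hpos : ∀ j, 0 < (r ᵥ* X + s ᵥ* Y) j) {w : ι → ℝ} (hXw : 0 ≤ X *ᵥ w)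
    (hYw : 0 ≤ Y *ᵥ w) : 0 ≤ w := by
  set v := w ⊓ 0
  have hv : ∀ j, (r ᵥ* X + s ᵥ* Y) j * v j ≤ 0 := fun j =>
    mul_nonpos_of_nonneg_of_nonpos (hpos j).le inf_le_right
  -- `(rᵀX + sᵀY) v = rᵀ(Xv) + sᵀ(Yv)` is both `≥ 0` and a sum of nonpositive terms.
  have hsum : ∑ j, (r ᵥ* X + s ᵥ* Y) j * v j = 0 := by
    refine le_antisymm (Finset.sum_nonpos fun j _ => hv j) ?_
    have hXv := hX.mulVec_inf_zero_nonneg hXw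
    have hYv := hY.mulVec_inf_zero_nonneg hYw
    calc (0 : ℝ) ≤ r ⬝ᵥ (X *ᵥ v) + s ⬝ᵥ (Y *ᵥ v) :=
          add_nonneg (dotProduct_nonneg_of_nonneg hr hXv) (dotProduct_nonneg_of_nonneg hs hYv)
      _ = ∑ j, (r ᵥ* X + s ᵥ* Y) j * v j := by
          rw [dotProduct_mulVec, dotProduct_mulVec, ← add_dotProduct]; rfl
  have hv0 : v = 0 := funext fun j =>
    (mul_eq_zero.mp ((Finset.sum_eq_zero_iff_of_nonpos fun j _ => hv j).mp hsum j
      (Finset.mem_univ j))).resolve_left (hpos j).ne'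
  exact inf_eq_right.mp hv0

theorem IsZMatrix.isUnit_of_mul_eq {A : Matrix ι ι ℝ} (hX : IsZMatrix X) (hY : IsZMatrix Y)
    (hAXY : A * X = Y) (hr : 0 ≤ r) (hs : 0 ≤ s) (hpos : ∀ j, 0 < (r ᵥ* X + s ᵥ* Y) j) :
    IsUnit X := by
  refine mulVec_injective_iff_isUnit.mp ((injective_iff_map_eq_zero X.mulVecLin).mpr ?_)
  intro u (hu : X *ᵥ u = 0)
  have hYu : Y *ᵥ u = 0 := by rw [← hAXY, ← mulVec_mulVec, hu, mulVec_zero]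
  have hnonneg : ∀ w : ι → ℝ, X *ᵥ w = 0 → Y *ᵥ w = 0 → 0 ≤ w := fun w hXw hYw =>
    nonneg_of_mulVec_nonneg hX hY hr hs hpos hXw.ge hYw.ge
  exact le_antisymm
    (neg_nonneg.mp (hnonneg (-u) (by rw [mulVec_neg, hu, neg_zero])
      (by rw [mulVec_neg, hYu, neg_zero])))
    (hnonneg u hu hYu)

end HiddenZ

theorem exists_pos_le_div_smul {ι : Type*} [Finite ι] {p u : ι → ℝ} (hp : ∀ i, 0 < p i)
    (hu : ∃ i, 0 < u i) : ∃ i, 0 < u i ∧ u ≤ (u i / p i) • p := by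
  obtain ⟨j, hj⟩ := hu
  have : Nonempty ι := ⟨j⟩
  obtain ⟨i, hi⟩ := Finite.exists_max fun k => u k / p k
  refine ⟨i, ?_, fun k => (div_le_iff₀ (hp k)).mp (hi k)⟩
  exact (div_pos_iff_of_pos_right (hp i)).mp ((div_pos hj (hp j)).trans_le (hi j))

namespace Matrix

variable {ι κ : Type*} [Fintype ι] [Fintype κ]

def ReversesSignStrictly (A : Matrix ι ι ℝ) (z : ι → ℝ) : Prop :=
  ∀ i, z i ≠ 0 → z i * (A *ᵥ z) i < 0

theorem ReversesSignStrictly.neg {A : Matrix ι ι ℝ} {z : ι → ℝ}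
    (hz : A.ReversesSignStrictly z) : A.ReversesSignStrictly (-z) := by
  intro i hi
  simpa [mulVec_neg] using hz i (neg_ne_zero.mp hi)

theorem mulVec_extend_zero {m R : Type*} [NonUnitalNonAssocSemiring R] {e : κ → ι}
    (he : Function.Injective e) (A : Matrix m ι R) (w : κ → R) :
    A *ᵥ Function.extend e w 0 = A.submatrix id e *ᵥ w := by
  ext i
  refine (Fintype.sum_of_injective e he _ _ (fun j hj => ?_) fun k => ?_).symm
  · simp [Function.extend_apply' _ _ _ (by simpa using hj)]
  · simp [he.extend_apply]

theorem ReversesSignStrictly.extend_zero {A : Matrix ι ι ℝ} {e : κ → ι}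
    (he : Function.Injective e) {w : κ → ℝ} (hw : (A.submatrix e e).ReversesSignStrictly w) :
    A.ReversesSignStrictly (Function.extend e w 0) := by
  intro i hi
  by_cases hie : ∃ k, e k = i
  · obtain ⟨k, rfl⟩ := hie
    rw [mulVec_extend_zero he, he.extend_apply] at *
    exact hw k hi
  · exact absurd (Function.extend_apply' _ _ _ hie) hi

theorem exists_pos_det_add_smul_one_eq_zero [DecidableEq ι] {B : Matrix ι ι ℝ}
    (hB : B.det < 0) : ∃ t : ℝ, 0 < t ∧ (B + t • 1).det = 0 := by
  set f : Polynomial ℝ := (-B).charpoly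
  have hf : ∀ t, f.eval t = (B + t • 1).det := fun t => by
    rw [eval_charpoly, sub_neg_eq_add, add_comm, scalar_apply, smul_one_eq_diagonal]
  have hdeg : 0 < f.degree := by
    rw [charpoly_degree_eq_dim, Nat.cast_pos, Fintype.card_pos_iff]
    by_contra hempty
    rw [not_nonempty_iff] at hempty
    exact (det_isEmpty (A := B) ▸ hB).not_gt zero_lt_one
  have htop : Filter.Tendsto (fun t => f.eval t) Filter.atTop Filter.atTop :=
    Polynomial.tendsto_atTop_of_leadingCoeff_nonneg f hdeg
      (by rw [(charpoly_monic (-B)).leadingCoeff]; exact zero_le_one)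
  have hf0 : f.eval 0 < 0 := by simpa [hf] using hB
  obtain ⟨t, ht, hft⟩ := intermediate_value_Ici f.continuous.continuousOn htop hf0.le
  exact ⟨t, lt_of_le_of_ne ht (by rintro rfl; exact hf0.ne hft), (hf t).symm.trans hft⟩

theorem det_nonneg_of_forall_reversesSignStrictly [DecidableEq ι] {B : Matrix ι ι ℝ}
    (h : ∀ z, B.ReversesSignStrictly z → z = 0) : 0 ≤ B.det := by
  by_contra! hB
  obtain ⟨t, ht, hdet⟩ := exists_pos_det_add_smul_one_eq_zero hB
  obtain ⟨w, hw, hker⟩ := exists_mulVec_eq_zero_iff.mpr hdet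
  have hBw : B *ᵥ w = -t • w := by
    rw [add_mulVec, smul_mulVec, one_mulVec] at hker
    exact eq_neg_of_add_eq_zero_left hker ▸ (neg_smul t w).symm
  refine hw (h w fun i hi => ?_)
  rw [hBw, Pi.smul_apply, smul_eq_mul]
  nlinarith [mul_self_pos.mpr hi]

end Matrix

theorem IsHiddenZ.eq_zero_of_reversesSignStrictly {ι : Type*} [Fintype ι] [DecidableEq ι]
    {A : Matrix ι ι ℝ} (hA : IsHiddenZ A) {x : ι → ℝ} (hx : ∀ i, 0 < x i)
    (hAx : 0 ≤ A *ᵥ x) {z : ι → ℝ} (hz : A.ReversesSignStrictly z) : z = 0 := by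
  obtain ⟨X, Y, r, s, hX, hY, hAXY, hr, hs, hpos⟩ := hA
  have hYX : ∀ u, Y *ᵥ u = A *ᵥ (X *ᵥ u) := fun u => by rw [← hAXY, mulVec_mulVec]
  have hsurj := mulVec_surjective_iff_isUnit.mpr (hX.isUnit_of_mul_eq hY hAXY hr hs hpos)
  -- `x = Xp` with `p > 0`: this is where `Ax ≥ 0` enters.
  obtain ⟨p, rfl⟩ := hsurj x
  have hp : ∀ i, 0 < p i := by
    have hp0 : 0 ≤ p := nonneg_of_mulVec_nonneg hX hY hr hs hpos (fun i => (hx i).le)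
      (hYX p ▸ hAx)
    refine fun i => (hp0 i).lt_of_ne' fun hpi => (hx i).not_ge ?_
    simpa using hX.mulVec_apply_le hp0 (i := i) hpi.symm
  obtain ⟨u, rfl⟩ := hsurj z
  by_contra hz0
  wlog hu : ∃ i, 0 < u i generalizing u
  · refine this (-u) (by simpa [mulVec_neg] using hz.neg) (by simpa [mulVec_neg] using hz0) ?_
    by_contra! hnpos
    have hu0 : u = 0 :=
      le_antisymm (fun i => not_lt.mp fun h => hu ⟨i, h⟩) fun i => by simpa using hnpos i
    exact hz0 (by rw [hu0, mulVec_zero])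
  -- Compare `u` with the multiple `t • p` of `p` touching it at `i`.
  obtain ⟨i, hui, hle⟩ := exists_pos_le_div_smul hp hu
  have ht : 0 < u i / p i := div_pos hui (hp i)
  have heq : u i = ((u i / p i) • p) i := by simp [(hp i).ne']
  have hXu := hX.mulVec_apply_le hle heq
  have hYu := hY.mulVec_apply_le hle heq
  rw [mulVec_smul, Pi.smul_apply, smul_eq_mul] at hXu hYu
  rw [hYX, hYX] at hYu
  have hzi : 0 < (X *ᵥ u) i := (mul_pos ht (hx i)).trans_le hXu
  exact (hz i hzi.ne').not_ge
    (mul_nonneg hzi.le ((mul_nonneg ht.le (hAx i)).trans hYu))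

theorem hiddenZ_P0 {n : ℕ} (A : Matrix (Fin n) (Fin n) ℝ) (hA : IsHiddenZ A)
    (x : Fin n → ℝ) (hx : ∀ i, 0 < x i) (hAx : ∀ i, 0 ≤ A.mulVec x i) :
    ∀ α : Finset (Fin n), 0 ≤ principalMinor A α := by
  intro α
  refine det_nonneg_of_forall_reversesSignStrictly fun w hw => ?_
  have hext := hA.eq_zero_of_reversesSignStrictly hx hAx (hw.extend_zero Subtype.val_injective)
  funext k
  simpa [Subtype.val_injective.extend_apply] using congrFun hext k
end

section
/- Let A be a singular n×n hidden Z-matrix. Then the value of the matrix game with payoff matrix A is not positive; equivalently, there is no nonzero nonnegative vector x with Ax > 0 componentwise. -/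
open Matrix

/-- If `X`, `Y` are Z-matrices with `rᵀX + sᵀY > 0` for `r, s ≥ 0`, then
`Xu ≥ 0` and `Yu ≥ 0` imply `u ≥ 0`. -/
lemma zlem1 {n : ℕ} {X Y : Matrix (Fin n) (Fin n) ℝ} {r s : Fin n → ℝ}
    (hX : IsZMatrix X) (hY : IsZMatrix Y) (hr : ∀ i, 0 ≤ r i) (hs : ∀ i, 0 ≤ s i)
    (hc : ∀ j, 0 < (Matrix.vecMul r X + Matrix.vecMul s Y) j)
    {u : Fin n → ℝ} (hXu : ∀ i, 0 ≤ X.mulVec u i) (hYu : ∀ i, 0 ≤ Y.mulVec u i) :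
    ∀ i, 0 ≤ u i := by
  by_contra h
  push_neg at h
  obtain ⟨k, hk⟩ := h
  set w : Fin n → ℝ := fun i => max (-u i) 0 with hwdef
  have hw0 : ∀ i, 0 ≤ w i := fun i => le_max_right _ _
  have hwu : ∀ i, -u i ≤ w i := fun i => le_max_left _ _
  have hwk : 0 < w k := lt_of_lt_of_le (neg_pos.2 hk) (hwu k)
  have key : ∀ (M : Matrix (Fin n) (Fin n) ℝ), IsZMatrix M →
      (∀ i, 0 ≤ M.mulVec u i) → ∀ i, M.mulVec w i ≤ 0 := by
    intro M hM hMu i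
    by_cases hui : 0 ≤ u i
    · have hwi : w i = 0 := max_eq_right (neg_nonpos.2 hui)
      have : M.mulVec w i = ∑ j, M i j * w j := rfl
      rw [this]
      apply Finset.sum_nonpos
      intro j _
      rcases eq_or_ne j i with rfl | hji
      · rw [hwi]; simp
      · exact mul_nonpos_iff.mpr (Or.inr ⟨hM i j (Ne.symm hji), hw0 j⟩)
    · push_neg at hui
      have hwi : w i = -u i := max_eq_left (by linarith)
      have h1 : M.mulVec w i ≤ ∑ j, M i j * (-u j) := by
        have : M.mulVec w i = ∑ j, M i j * w j := rfl
        rw [this]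
        apply Finset.sum_le_sum
        intro j _
        rcases eq_or_ne j i with rfl | hji
        · rw [hwi]
        · exact mul_le_mul_of_nonpos_left (hwu j) (hM i j (Ne.symm hji))
      have h2 : ∑ j, M i j * (-u j) = -(M.mulVec u i) := by
        simp [Matrix.mulVec, dotProduct, Finset.sum_neg_distrib]
      rw [h2] at h1
      linarith [hMu i]
  have hsum_pos : 0 < ∑ j, (Matrix.vecMul r X + Matrix.vecMul s Y) j * w j := by
    apply Finset.sum_pos'
    · intro j _; exact mul_nonneg (hc j).le (hw0 j)
    · exact ⟨k, Finset.mem_univ k, mul_pos (hc k) hwk⟩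
  have heq : ∑ j, (Matrix.vecMul r X + Matrix.vecMul s Y) j * w j
      = r ⬝ᵥ X.mulVec w + s ⬝ᵥ Y.mulVec w := by
    rw [Matrix.dotProduct_mulVec, Matrix.dotProduct_mulVec]
    simp [dotProduct, add_mul, Finset.sum_add_distrib]
  have hXw : r ⬝ᵥ X.mulVec w ≤ 0 := by
    apply Finset.sum_nonpos
    intro j _
    exact mul_nonpos_iff.mpr (Or.inl ⟨hr j, key X hX hXu j⟩)
  have hYw : s ⬝ᵥ Y.mulVec w ≤ 0 := by
    apply Finset.sum_nonpos
    intro j _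
    exact mul_nonpos_iff.mpr (Or.inl ⟨hs j, key Y hY hYu j⟩)
  rw [heq] at hsum_pos
  linarith

/-- A Z-matrix with a nonnegative vector mapped to a positive vector is nonsingular. -/
lemma zdet {n : ℕ} {M : Matrix (Fin n) (Fin n) ℝ} (hM : IsZMatrix M)
    {u : Fin n → ℝ} (hu : ∀ i, 0 ≤ u i) (hMu : ∀ i, 0 < M.mulVec u i) :
    M.det ≠ 0 := by
  have hupos : ∀ i, 0 < u i := by
    intro i
    have h1 : M.mulVec u i ≤ M i i * u i := by
      have : M.mulVec u i = ∑ j, M i j * u j := rfl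
      rw [this]
      calc ∑ j, M i j * u j ≤ ∑ j, (if j = i then M i i * u i else 0) := by
            apply Finset.sum_le_sum
            intro j _
            rcases eq_or_ne j i with rfl | hji
            · simp
            · simp only [if_neg hji]
              exact mul_nonpos_iff.mpr (Or.inr ⟨hM i j (Ne.symm hji), hu j⟩)
        _ = M i i * u i := by simp
    have h2 : 0 < M i i * u i := lt_of_lt_of_le (hMu i) h1
    rcases (hu i).lt_or_eq with h | h
    · exact h
    · exfalso; rw [← h] at h2; simp at h2
  intro hdet
  obtain ⟨v, hv0, hv⟩ := Matrix.exists_mulVec_eq_zero_iff.mpr hdet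
  obtain ⟨i0, hi0⟩ := Function.ne_iff.1 hv0
  set v' : Fin n → ℝ := if 0 < v i0 then v else -v with hv'def
  have hv' : M.mulVec v' = 0 := by
    rw [hv'def]
    split
    · exact hv
    · rw [Matrix.mulVec_neg, hv, neg_zero]
  have hvi0 : 0 < v' i0 := by
    rw [hv'def]
    split
    · assumption
    · rename_i h
      push_neg at h
      simp only [Pi.neg_apply, neg_pos]
      rcases h.lt_or_eq with h' | h'
      · exact h'
      · exact absurd h' (by simpa using hi0)
  obtain ⟨k, -, hk⟩ := Finset.exists_max_image Finset.univ (fun j => v' j / u j)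
    ⟨i0, Finset.mem_univ i0⟩
  have ht : 0 < v' k / u k :=
    lt_of_lt_of_le (div_pos hvi0 (hupos i0)) (hk i0 (Finset.mem_univ i0))
  set t := v' k / u k with htdef
  set w : Fin n → ℝ := fun j => t * u j - v' j with hwdef
  have hw0 : ∀ j, 0 ≤ w j := by
    intro j
    have := (div_le_iff₀ (hupos j)).1 (hk j (Finset.mem_univ j))
    simp only [hwdef]
    linarith
  have hwk : w k = 0 := by
    simp only [hwdef, htdef]
    rw [div_mul_cancel₀ _ (ne_of_gt (hupos k)), sub_self]
  have hweq : w = t • u - v' := rfl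
  have h1 : M.mulVec w k = t * M.mulVec u k := by
    rw [hweq, Matrix.mulVec_sub, Matrix.mulVec_smul, hv']
    simp
  have h2 : 0 < M.mulVec w k := by rw [h1]; exact mul_pos ht (hMu k)
  have h3 : M.mulVec w k ≤ 0 := by
    have : M.mulVec w k = ∑ j, M k j * w j := rfl
    rw [this]
    apply Finset.sum_nonpos
    intro j _
    rcases eq_or_ne j k with rfl | hjk
    · rw [hwk]; simp
    · exact mul_nonpos_iff.mpr (Or.inr ⟨hM k j (Ne.symm hjk), hw0 j⟩)
  linarith

theorem singular_hiddenZ_value_not_pos {n : ℕ} (A : Matrix (Fin n) (Fin n) ℝ)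
    (hA : IsHiddenZ A) (hsing : A.det = 0) :
    ¬ ∃ x : Fin n → ℝ, x ≠ 0 ∧ (∀ i, 0 ≤ x i) ∧ (∀ i, 0 < A.mulVec x i) := by
  rintro ⟨x, hx0, hxnn, hAx⟩
  obtain ⟨X, Y, r, s, hX, hY, hAXY, hr, hs, hc⟩ := hA
  have hdetX : IsUnit X.det := by
    rw [isUnit_iff_ne_zero]
    intro h
    obtain ⟨v, hv0, hv⟩ := Matrix.exists_mulVec_eq_zero_iff.mpr h
    have hYv : Y.mulVec v = 0 := by
      rw [← hAXY, ← Matrix.mulVec_mulVec, hv, Matrix.mulVec_zero]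
    have h1 := zlem1 hX hY hr hs hc (u := v)
      (by intro i; rw [hv]; exact le_refl 0) (by intro i; rw [hYv]; exact le_refl 0)
    have h2 := zlem1 hX hY hr hs hc (u := -v)
      (by intro i; rw [Matrix.mulVec_neg, hv]; simp)
      (by intro i; rw [Matrix.mulVec_neg, hYv]; simp)
    apply hv0
    funext i
    have ha := h1 i
    have hb := h2 i
    simp only [Pi.neg_apply] at hb
    have : v i = 0 := le_antisymm (by linarith) ha
    simpa using this
  set u : Fin n → ℝ := (X⁻¹).mulVec x with hudef
  have hXu : X.mulVec u = x := by
    rw [hudef, Matrix.mulVec_mulVec, Matrix.mul_nonsing_inv _ hdetX, Matrix.one_mulVec]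
  have hYu : Y.mulVec u = A.mulVec x := by
    rw [← hAXY, ← Matrix.mulVec_mulVec, hXu]
  have hu : ∀ i, 0 ≤ u i :=
    zlem1 hX hY hr hs hc (by intro i; rw [hXu]; exact hxnn i)
      (by intro i; rw [hYu]; exact (hAx i).le)
  have hdetY : Y.det ≠ 0 :=
    zdet hY hu (by intro i; rw [hYu]; exact hAx i)
  apply hdetY
  rw [← hAXY, Matrix.det_mul, hsing, zero_mul]
end

section
/- Let A be an n×n hidden Z-matrix and suppose there exists a nonzero nonnegative vector x with Ax > 0 componentwise (i.e., v(A) > 0). Then A is a P-matrix: all principal minors of A are strictly positive. -/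
open Matrix

section Aux

variable {ι : Type*} [Fintype ι] [DecidableEq ι]

/-- Half of the meet lemma: if `Xz ≥ 0`, `Xz' ≥ 0` and `z i ≤ z' i` then the `i`-th
component of `X (z ⊓ z')` is nonnegative. -/
lemma zmin_aux (X : Matrix ι ι ℝ) (hX : IsZMatrix X) (z z' : ι → ℝ)
    (hz : ∀ i, 0 ≤ X.mulVec z i) (i : ι) (hle : z i ≤ z' i) :
    0 ≤ X.mulVec (fun j => min (z j) (z' j)) i := by
  refine le_trans (hz i) ?_
  simp only [Matrix.mulVec, dotProduct]
  apply Finset.sum_le_sum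
  intro j _
  by_cases hj : j = i
  · subst hj
    rw [min_eq_left hle]
  · exact mul_le_mul_of_nonpos_left (min_le_left _ _) (hX i j (Ne.symm hj))

/-- For a Z-matrix `X`, the set `{z : Xz ≥ 0}` is closed under componentwise min. -/
lemma zmin (X : Matrix ι ι ℝ) (hX : IsZMatrix X) (z z' : ι → ℝ)
    (hz : ∀ i, 0 ≤ X.mulVec z i) (hz' : ∀ i, 0 ≤ X.mulVec z' i) (i : ι) :
    0 ≤ X.mulVec (fun j => min (z j) (z' j)) i := by
  rcases le_total (z i) (z' i) with h | h
  · exact zmin_aux X hX z z' hz i h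
  · have : (fun j => min (z j) (z' j)) = fun j => min (z' j) (z j) := by
      funext j; exact min_comm _ _
    rw [this]
    exact zmin_aux X hX z' z hz' i h

/-- Sign non-reversal implies positive determinant (homotopy to the identity + IVT). -/
lemma det_pos_of_nonreversal (B : Matrix ι ι ℝ)
    (h : ∀ z : ι → ℝ, z ≠ 0 → ∃ i, 0 < z i * B.mulVec z i) : 0 < B.det := by
  set f : ℝ → ℝ := fun t => ((1 - t) • B + t • (1 : Matrix ι ι ℝ)).det with hf
  have hcont : Continuous f := by
    apply Continuous.matrix_det
    exact ((continuous_const.sub continuous_id).smul continuous_const).add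
      (continuous_id.smul continuous_const)
  have hne : ∀ t ∈ Set.Icc (0 : ℝ) 1, f t ≠ 0 := by
    intro t ht h0
    obtain ⟨v, hv0, hv⟩ := Matrix.exists_mulVec_eq_zero_iff.mpr h0
    obtain ⟨i, hi⟩ := h v hv0
    have hvi : (1 - t) * (B.mulVec v i) + t * v i = 0 := by
      have := congrFun hv i
      simpa [Matrix.add_mulVec, Matrix.smul_mulVec, Matrix.one_mulVec] using this
    have hvi0 : v i ≠ 0 := by
      intro hz
      rw [hz] at hi
      simp at hi
    have h1 : 0 ≤ t := ht.1
    have h2 : t ≤ 1 := ht.2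
    have hsq : 0 < v i * v i := by
      rcases hvi0.lt_or_gt with h | h
      · exact mul_pos_of_neg_of_neg h h
      · exact mul_pos h h
    have hmul : (1 - t) * (v i * B.mulVec v i) + t * (v i * v i) = 0 := by
      linear_combination v i * hvi
    have ha : 0 ≤ (1 - t) * (v i * B.mulVec v i) := mul_nonneg (by linarith) hi.le
    have hb : 0 ≤ t * (v i * v i) := mul_nonneg h1 hsq.le
    have h1t : (1 - t) * (v i * B.mulVec v i) = 0 := by linarith
    have h2t : t * (v i * v i) = 0 := by linarith
    rcases mul_eq_zero.mp h1t with h' | h'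
    · rcases mul_eq_zero.mp h2t with h'' | h''
      · linarith
      · exact absurd h'' (ne_of_gt hsq)
    · exact absurd h' (ne_of_gt hi)
  have hf1 : f 1 = 1 := by simp [hf]
  have hf0 : f 0 = B.det := by simp [hf]
  by_contra hB
  push_neg at hB
  have hBlt : f 0 < 0 := by
    have hne0 := hne 0 ⟨le_refl _, zero_le_one⟩
    have hle : f 0 ≤ 0 := by rw [hf0]; exact hB
    rcases lt_or_eq_of_le hle with h | h
    · exact h
    · exact absurd h hne0
  have hsub := intermediate_value_Icc (zero_le_one (α := ℝ)) hcont.continuousOn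
  have h0mem : (0 : ℝ) ∈ Set.Icc (f 0) (f 1) := ⟨hBlt.le, by rw [hf1]; exact zero_le_one⟩
  obtain ⟨t, ht, hft⟩ := hsub h0mem
  exact hne t ht hft

end Aux

theorem hiddenZ_value_pos_P {n : ℕ} (A : Matrix (Fin n) (Fin n) ℝ)
    (hA : IsHiddenZ A) (x : Fin n → ℝ) (hx0 : x ≠ 0) (hx : ∀ i, 0 ≤ x i)
    (hAx : ∀ i, 0 < A.mulVec x i) :
    ∀ α : Finset (Fin n), 0 < principalMinor A α := by
  obtain ⟨X, Y, r, s, hZX, hZY, hAXY, hr, hs, hw⟩ := hA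
  obtain ⟨i₀, hi₀⟩ := Function.ne_iff.mp hx0
  have hne : Nonempty (Fin n) := ⟨i₀⟩
  -- Lemma A: a nonpositive vector with X m ≥ 0, Y m ≥ 0 is zero
  have keyA : ∀ m : Fin n → ℝ, (∀ i, 0 ≤ X.mulVec m i) → (∀ i, 0 ≤ Y.mulVec m i) →
      (∀ j, m j ≤ 0) → m = 0 := by
    intro m h1 h2 h3
    have hs1 : 0 ≤ dotProduct r (X.mulVec m) + dotProduct s (Y.mulVec m) := by
      apply add_nonneg
      · exact Finset.sum_nonneg fun j _ => mul_nonneg (hr j) (h1 j)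
      · exact Finset.sum_nonneg fun j _ => mul_nonneg (hs j) (h2 j)
    have heq : dotProduct r (X.mulVec m) + dotProduct s (Y.mulVec m)
        = ∑ j, (Matrix.vecMul r X + Matrix.vecMul s Y) j * m j := by
      rw [Matrix.dotProduct_mulVec, Matrix.dotProduct_mulVec]
      simp only [dotProduct, Pi.add_apply, add_mul]
      rw [Finset.sum_add_distrib]
    have hterm : ∀ j ∈ Finset.univ, (Matrix.vecMul r X + Matrix.vecMul s Y) j * m j ≤ 0 :=
      fun j _ => mul_nonpos_of_nonneg_of_nonpos (hw j).le (h3 j)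
    have hsum0 : ∑ j, (Matrix.vecMul r X + Matrix.vecMul s Y) j * m j = 0 := by
      refine le_antisymm (Finset.sum_nonpos hterm) ?_
      rw [← heq]; exact hs1
    funext j
    have hj0 := (Finset.sum_eq_zero_iff_of_nonpos hterm).mp hsum0 j (Finset.mem_univ j)
    have hwj := hw j
    rcases mul_eq_zero.mp hj0 with h | h
    · exact absurd h (ne_of_gt hwj)
    · exact h
  -- X is injective
  have hXinj : ∀ v : Fin n → ℝ, X.mulVec v = 0 → v = 0 := by
    intro v hv
    have hYv : Y.mulVec v = 0 := by
      rw [← hAXY, ← Matrix.mulVec_mulVec, hv, Matrix.mulVec_zero]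
    have hXnv : X.mulVec (-v) = 0 := by rw [Matrix.mulVec_neg, hv, neg_zero]
    have hYnv : Y.mulVec (-v) = 0 := by rw [Matrix.mulVec_neg, hYv, neg_zero]
    have hm := keyA (fun j => min (v j) (-v j))
      (zmin X hZX v (-v) (fun i => by rw [hv]; rfl) (fun i => by rw [hXnv]; rfl))
      (zmin Y hZY v (-v) (fun i => by rw [hYv]; rfl) (fun i => by rw [hYnv]; rfl))
      (fun j => by rcases le_total (v j) 0 with h | h
                   · exact le_trans (min_le_left _ _) h
                   · exact le_trans (min_le_right _ _) (by linarith))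
    funext j
    have := congrFun hm j
    simp only [Pi.zero_apply] at this
    rcases le_total (v j) (-v j) with h | h
    · rw [min_eq_left h] at this; exact this
    · rw [min_eq_right h] at this; simpa using neg_eq_zero.mp this
  have hdet : X.det ≠ 0 := by
    intro h0
    obtain ⟨v, hv0, hv⟩ := Matrix.exists_mulVec_eq_zero_iff.mpr h0
    exact hv0 (hXinj v hv)
  have hdetU : IsUnit X.det := isUnit_iff_ne_zero.mpr hdet
  have hXXinv : X * X⁻¹ = 1 := Matrix.mul_nonsing_inv X hdetU
  -- choose δ
  obtain ⟨δ, hδpos, hδ⟩ : ∃ δ : ℝ, 0 < δ ∧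
      ∀ i, 0 < A.mulVec x i + δ * A.mulVec (fun _ => 1) i := by
    set d : Fin n → ℝ := A.mulVec (fun _ => 1) with hd
    set c : Fin n → ℝ := A.mulVec x with hc
    refine ⟨Finset.univ.inf' Finset.univ_nonempty (fun i => c i / (2 * (|d i| + 1))), ?_, ?_⟩
    · apply (Finset.lt_inf'_iff _).mpr
      intro i _
      apply div_pos (hAx i)
      positivity
    · intro i
      have hle : Finset.univ.inf' Finset.univ_nonempty (fun i => c i / (2 * (|d i| + 1)))
          ≤ c i / (2 * (|d i| + 1)) := Finset.inf'_le _ (Finset.mem_univ i)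
      set δ' := Finset.univ.inf' Finset.univ_nonempty (fun i => c i / (2 * (|d i| + 1)))
      have hδ'pos : 0 < δ' := by
        apply (Finset.lt_inf'_iff _).mpr
        intro i _
        apply div_pos (hAx i)
        positivity
      have hpos : (0:ℝ) < 2 * (|d i| + 1) := by positivity
      have h1 : δ' * (2 * (|d i| + 1)) ≤ c i := (le_div_iff₀ hpos).mp hle
      have h2 : -|d i| ≤ d i := neg_abs_le _
      have h3 : 0 ≤ |d i| := abs_nonneg _
      have := hAx i
      nlinarith [mul_le_mul_of_nonneg_left h2 hδ'pos.le]
  set x' : Fin n → ℝ := fun i => x i + δ with hx'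
  have hx'pos : ∀ i, 0 < x' i := fun i => add_pos_of_nonneg_of_pos (hx i) hδpos
  have hAx' : ∀ i, 0 < A.mulVec x' i := by
    intro i
    have hxeq : x' = x + δ • (fun _ => (1:ℝ)) := by
      funext j; simp [hx', smul_eq_mul]
    rw [hxeq, Matrix.mulVec_add, Matrix.mulVec_smul]
    simpa [smul_eq_mul] using hδ i
  set u : Fin n → ℝ := X⁻¹.mulVec x' with hu
  have hXu : X.mulVec u = x' := by
    rw [hu, Matrix.mulVec_mulVec, hXXinv, Matrix.one_mulVec]
  have hYu : ∀ i, 0 < Y.mulVec u i := by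
    intro i
    rw [← hAXY, ← Matrix.mulVec_mulVec, hXu]
    exact hAx' i
  have hXu' : ∀ i, 0 < X.mulVec u i := by
    intro i; rw [hXu]; exact hx'pos i
  -- u ≥ 0
  have hupos0 : ∀ j, 0 ≤ u j := by
    have hX0 : X.mulVec (0 : Fin n → ℝ) = 0 := Matrix.mulVec_zero X
    have hY0 : Y.mulVec (0 : Fin n → ℝ) = 0 := Matrix.mulVec_zero Y
    have hm := keyA (fun j => min (u j) 0)
      (fun i => by
        have := zmin X hZX u 0 (fun i => (hXu' i).le) (fun i => by rw [hX0]; rfl) i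
        simpa using this)
      (fun i => by
        have := zmin Y hZY u 0 (fun i => (hYu i).le) (fun i => by rw [hY0]; rfl) i
        simpa using this)
      (fun j => min_le_right _ _)
    intro j
    have := congrFun hm j
    simp only [Pi.zero_apply] at this
    calc (0:ℝ) = min (u j) 0 := this.symm
    _ ≤ u j := min_le_left _ _
  -- u > 0
  have hupos : ∀ j, 0 < u j := by
    intro j
    have h1 : Y.mulVec u j ≤ Y j j * u j := by
      simp only [Matrix.mulVec, dotProduct]
      calc ∑ k, Y j k * u k ≤ ∑ k, (if k = j then Y j j * u j else 0) := by
            apply Finset.sum_le_sum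
            intro k _
            by_cases hk : k = j
            · subst hk; simp
            · rw [if_neg hk]
              exact mul_nonpos_of_nonpos_of_nonneg (hZY j k (Ne.symm hk)) (hupos0 k)
      _ = Y j j * u j := by rw [Finset.sum_ite_eq' Finset.univ j (fun _ => Y j j * u j)]
                            simp
    have h2 : 0 < Y j j * u j := lt_of_lt_of_le (hYu j) h1
    rcases (hupos0 j).lt_or_eq with h | h
    · exact h
    · exfalso; rw [← h, mul_zero] at h2; exact lt_irrefl 0 h2
  -- dominance key lemma
  have key : ∀ M : Matrix (Fin n) (Fin n) ℝ, IsZMatrix M → (∀ i, 0 < M.mulVec u i) →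
      ∀ v : Fin n → ℝ, ∀ i, 0 < v i → (∀ j, |v j| * u i ≤ |v i| * u j) →
      0 < M.mulVec v i := by
    intro M hM hMu v i hvi hmax
    have hle : v i * M.mulVec u i ≤ u i * M.mulVec v i := by
      simp only [Matrix.mulVec, dotProduct, Finset.mul_sum]
      apply Finset.sum_le_sum
      intro j _
      by_cases hj : j = i
      · subst hj; exact le_of_eq (by ring)
      · have h2 : v j ≤ |v j| := le_abs_self _
        have h3 : |v j| * u i ≤ |v i| * u j := hmax j
        have h4 : |v i| = v i := abs_of_pos hvi
        have h5 : M i j ≤ 0 := hM i j (Ne.symm hj)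
        have h6 : 0 < u i := hupos i
        have h7 : 0 < u j := hupos j
        have h8 : u i * v j ≤ v i * u j := by nlinarith
        nlinarith
    have h9 : 0 < u i * M.mulVec v i := lt_of_lt_of_le (mul_pos hvi (hMu i)) hle
    by_contra hcon
    push_neg at hcon
    nlinarith [hupos i]
  -- sign non-reversal for A
  have hrev : ∀ z : Fin n → ℝ, z ≠ 0 → ∃ i, 0 < z i * A.mulVec z i := by
    intro z hz
    set v : Fin n → ℝ := X⁻¹.mulVec z with hvdef
    have hXv : X.mulVec v = z := by
      rw [hvdef, Matrix.mulVec_mulVec, hXXinv, Matrix.one_mulVec]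
    have hAz : A.mulVec z = Y.mulVec v := by
      rw [← hXv, Matrix.mulVec_mulVec, hAXY]
    have hv0 : v ≠ 0 := by
      intro h
      apply hz
      rw [← hXv, h, Matrix.mulVec_zero]
    obtain ⟨i, -, hi⟩ := Finset.exists_max_image Finset.univ (fun j => |v j| / u j)
      Finset.univ_nonempty
    have hmax : ∀ j, |v j| * u i ≤ |v i| * u j := by
      intro j
      have := hi j (Finset.mem_univ j)
      rwa [div_le_div_iff₀ (hupos j) (hupos i)] at this
    have hvi0 : v i ≠ 0 := by
      obtain ⟨k, hk⟩ := Function.ne_iff.mp hv0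
      intro h
      have h1 := hmax k
      rw [h, abs_zero, zero_mul] at h1
      have : 0 < |v k| * u i := mul_pos (abs_pos.mpr hk) (hupos i)
      linarith
    have hzi : z i = X.mulVec v i := by rw [hXv]
    have hAzi : A.mulVec z i = Y.mulVec v i := by rw [hAz]
    rcases hvi0.lt_or_gt with hneg | hpos
    · have hmax' : ∀ j, |(-v) j| * u i ≤ |(-v) i| * u j := by
        intro j; simpa [abs_neg] using hmax j
      have hX' := key X hZX hXu' (-v) i (by simpa using hneg) hmax'
      have hY' := key Y hZY hYu (-v) i (by simpa using hneg) hmax'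
      rw [Matrix.mulVec_neg] at hX' hY'
      simp only [Pi.neg_apply] at hX' hY'
      refine ⟨i, ?_⟩
      rw [hzi, hAzi]
      exact mul_pos_of_neg_of_neg (by linarith) (by linarith)
    · have hX' := key X hZX hXu' v i hpos hmax
      have hY' := key Y hZY hYu v i hpos hmax
      refine ⟨i, ?_⟩
      rw [hzi, hAzi]
      exact mul_pos hX' hY'
  -- conclude
  intro α
  unfold principalMinor
  apply det_pos_of_nonreversal
  intro z hz
  set zt : Fin n → ℝ := fun i => if h : i ∈ α then z ⟨i, h⟩ else 0 with hzt
  have hzt0 : zt ≠ 0 := by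
    obtain ⟨k, hk⟩ := Function.ne_iff.mp hz
    intro h
    apply hk
    have := congrFun h (k : Fin n)
    simp only [hzt, Pi.zero_apply] at this
    rw [dif_pos k.2] at this
    simpa using this
  obtain ⟨i, hi⟩ := hrev zt hzt0
  have hiα : i ∈ α := by
    by_contra hiα
    rw [show zt i = 0 from dif_neg hiα, zero_mul] at hi
    exact lt_irrefl 0 hi
  refine ⟨⟨i, hiα⟩, ?_⟩
  have e1 : z ⟨i, hiα⟩ = zt i := by rw [hzt]; simp [dif_pos hiα]
  have e2 : (A.submatrix (fun i : {x // x ∈ α} => (i : Fin n))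
      (fun j : {x // x ∈ α} => (j : Fin n))).mulVec z ⟨i, hiα⟩ = A.mulVec zt i := by
    simp only [Matrix.mulVec, dotProduct, Matrix.submatrix_apply]
    rw [show (∑ j : Fin n, A i j * zt j)
        = ∑ j ∈ α, A i j * zt j from ?_]
    · rw [← Finset.sum_attach α (fun j => A i j * zt j)]
      apply Finset.sum_congr rfl
      intro j _
      congr 1
      rw [hzt]
      simp [dif_pos j.2]
    · symm
      apply Finset.sum_subset (Finset.subset_univ α)
      intro j _ hjα
      rw [show zt j = 0 from dif_neg hjα, mul_zero]
  rw [e1, e2]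
  exact hi
end

section
/- Let A be an n×n Z-matrix. If there exists a nonzero nonnegative vector x such that Ax > 0 componentwise, then A is a P-matrix (all principal minors positive). -/
/-!
Eliminating the first variable of a Z-matrix `A` with `A *ᵥ x > 0` and `x ≥ 0` leaves a Schur
complement that is again a Z-matrix, with the tail of `x` as a positive witness; the pivot is
positive because `A 0 0 * x 0 ≥ (A *ᵥ x) 0 > 0`. Induction on the size then gives
`det A = A 0 0 * det (Schur complement) > 0`. Principal submatrices inherit both hypotheses, since
restricting `x` to a set of coordinates only drops the nonpositive terms `A i j * x j`, `j ≠ i`.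
-/

open Matrix

namespace Matrix

variable {K : Type*} [Field K] {n : ℕ}

def pivotSchur (A : Matrix (Fin (n + 1)) (Fin (n + 1)) K) : Matrix (Fin n) (Fin n) K :=
  of fun i j => A i.succ j.succ - A i.succ 0 / A 0 0 * A 0 j.succ

theorem det_eq_mul_det_pivotSchur (A : Matrix (Fin (n + 1)) (Fin (n + 1)) K) (h : A 0 0 ≠ 0) :
    A.det = A 0 0 * (pivotSchur A).det := by
  set c : Fin (n + 1) → K := Fin.cases 0 fun i => A i.succ 0 / A 0 0
  set B : Matrix (Fin (n + 1)) (Fin (n + 1)) K := of fun i j => A i j - c i * A 0 j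
  have hB : A.det = B.det :=
    det_eq_of_forall_row_eq_smul_add_const c 0 rfl fun i j => by simp [B, c]
  have hB0 : ∀ i : Fin n, B i.succ 0 = 0 := fun i => by simp [B, c, div_mul_cancel₀ _ h]
  have hSchur : B.submatrix Fin.succ Fin.succ = pivotSchur A := by
    ext i j
    simp [B, c, pivotSchur]
  rw [hB, det_succ_column_zero, Fin.sum_univ_succ, Fin.succAbove_zero, hSchur]
  simp [hB0, B, c]

theorem pivotSchur_mulVec (A : Matrix (Fin (n + 1)) (Fin (n + 1)) K) (h : A 0 0 ≠ 0)
    (x : Fin (n + 1) → K) (i : Fin n) :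
    (pivotSchur A *ᵥ fun j => x j.succ) i = (A *ᵥ x) i.succ - A i.succ 0 / A 0 0 * (A *ᵥ x) 0 := by
  simp only [pivotSchur, mulVec, dotProduct, Fin.sum_univ_succ, of_apply, sub_mul,
    Finset.sum_sub_distrib, mul_assoc, ← Finset.mul_sum]
  field_simp
  ring

end Matrix

open Function

section ZMatrix

variable {ι κ : Type*} [Fintype ι] [DecidableEq ι] [Fintype κ]
  {A : Matrix ι ι ℝ} {x : ι → ℝ}

theorem IsZMatrix.submatrix [DecidableEq κ] (hA : IsZMatrix A) {f : κ → ι} (hf : Injective f) :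
    IsZMatrix (A.submatrix f f) :=
  fun _ _ hij => hA _ _ (hf.ne hij)

theorem IsZMatrix.mulVec_le_submatrix_mulVec (hA : IsZMatrix A) (hx : ∀ i, 0 ≤ x i)
    {f : κ → ι} (hf : Injective f) (i : κ) :
    (A *ᵥ x) (f i) ≤ (A.submatrix f f *ᵥ (x ∘ f)) i := by
  calc (A *ᵥ x) (f i) = ∑ j, A (f i) j * x j := rfl
    _ ≤ ∑ j ∈ Finset.univ.map ⟨f, hf⟩, A (f i) j * x j := by
      refine Finset.sum_le_sum_of_subset_of_nonpos' (Finset.subset_univ _) fun j _ hj => ?_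
      have hji : f i ≠ j := fun h => hj (h ▸ Finset.mem_map_of_mem _ (Finset.mem_univ i))
      exact mul_nonpos_of_nonpos_of_nonneg (hA _ _ hji) (hx j)
    _ = (A.submatrix f f *ᵥ (x ∘ f)) i := by simp [mulVec, dotProduct]

theorem IsZMatrix.mulVec_le_diag_mul (hA : IsZMatrix A) (hx : ∀ i, 0 ≤ x i) (i : ι) :
    (A *ᵥ x) i ≤ A i i * x i := by
  simpa [mulVec, dotProduct] using
    hA.mulVec_le_submatrix_mulVec hx (f := fun _ : Unit => i) (injective_of_subsingleton _) ()

theorem IsZMatrix.diag_pos (hA : IsZMatrix A) (hx : ∀ i, 0 ≤ x i) (hAx : ∀ i, 0 < (A *ᵥ x) i)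
    (i : ι) : 0 < A i i :=
  pos_of_mul_pos_left ((hAx i).trans_le (hA.mulVec_le_diag_mul hx i)) (hx i)

theorem IsZMatrix.mulVec_submatrix_pos (hA : IsZMatrix A) (hx : ∀ i, 0 ≤ x i)
    (hAx : ∀ i, 0 < (A *ᵥ x) i) {f : κ → ι} (hf : Injective f) (i : κ) :
    0 < (A.submatrix f f *ᵥ (x ∘ f)) i :=
  (hAx (f i)).trans_le (hA.mulVec_le_submatrix_mulVec hx hf i)

end ZMatrix

section Pivot

variable {n : ℕ} {A : Matrix (Fin (n + 1)) (Fin (n + 1)) ℝ}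

theorem IsZMatrix.pivotSchur (hA : IsZMatrix A) (h0 : 0 < A 0 0) : IsZMatrix A.pivotSchur := by
  intro i j hij
  have hij' : A i.succ j.succ ≤ 0 := hA _ _ (Fin.succ_injective _ |>.ne hij)
  have hcorr : 0 ≤ A i.succ 0 / A 0 0 * A 0 j.succ :=
    mul_nonneg_of_nonpos_of_nonpos (div_nonpos_of_nonpos_of_nonneg (hA _ _ i.succ_ne_zero) h0.le)
      (hA _ _ j.succ_ne_zero.symm)
  simp only [Matrix.pivotSchur, Matrix.of_apply]
  linarith

theorem IsZMatrix.pivotSchur_mulVec_pos (hA : IsZMatrix A) {x : Fin (n + 1) → ℝ}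
    (h0 : 0 < A 0 0) (hAx : ∀ i, 0 < (A *ᵥ x) i) (i : Fin n) :
    0 < (A.pivotSchur *ᵥ fun j => x j.succ) i := by
  have hcoef : A i.succ 0 / A 0 0 ≤ 0 := div_nonpos_of_nonpos_of_nonneg (hA _ _ i.succ_ne_zero) h0.le
  rw [A.pivotSchur_mulVec h0.ne']
  nlinarith [hAx i.succ, hAx 0]

end Pivot

theorem IsZMatrix.det_pos_of_mulVec_pos_fin {n : ℕ} {A : Matrix (Fin n) (Fin n) ℝ}
    (hA : IsZMatrix A) {x : Fin n → ℝ} (hx : ∀ i, 0 ≤ x i) (hAx : ∀ i, 0 < (A *ᵥ x) i) :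
    0 < A.det := by
  induction n with
  | zero => simp
  | succ n ih =>
    have h0 : 0 < A 0 0 := hA.diag_pos hx hAx 0
    rw [A.det_eq_mul_det_pivotSchur h0.ne']
    exact mul_pos h0 <| ih (hA.pivotSchur h0) (fun i => hx i.succ) (hA.pivotSchur_mulVec_pos h0 hAx)

theorem IsZMatrix.det_pos_of_mulVec_pos {ι : Type*} [Fintype ι] [DecidableEq ι]
    {A : Matrix ι ι ℝ} (hA : IsZMatrix A) {x : ι → ℝ} (hx : ∀ i, 0 ≤ x i)
    (hAx : ∀ i, 0 < (A *ᵥ x) i) : 0 < A.det := by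
  have e := (Fintype.equivFin ι).symm
  rw [← det_submatrix_equiv_self e]
  exact (hA.submatrix e.injective).det_pos_of_mulVec_pos_fin (fun i => hx (e i))
    (hA.mulVec_submatrix_pos hx hAx e.injective)

theorem Z_value_pos_P_general {n : ℕ} (A : Matrix (Fin n) (Fin n) ℝ) (hA : IsZMatrix A)
    (x : Fin n → ℝ) (hx : ∀ i, 0 ≤ x i) (hAx : ∀ i, 0 < A.mulVec x i) :
    ∀ α : Finset (Fin n), 0 < principalMinor A α := by
  intro α
  exact (hA.submatrix Subtype.val_injective).det_pos_of_mulVec_pos (fun i => hx i)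
    (hA.mulVec_submatrix_pos hx hAx Subtype.val_injective)

theorem Z_value_pos_P {n : ℕ} (A : Matrix (Fin n) (Fin n) ℝ) (hA : IsZMatrix A)
    (x : Fin n → ℝ) (hx0 : x ≠ 0) (hx : ∀ i, 0 ≤ x i) (hAx : ∀ i, 0 < A.mulVec x i) :
    ∀ α : Finset (Fin n), 0 < principalMinor A α :=
  Z_value_pos_P_general A hA x hx hAx
end

section
/- Let A be an n×n Z-matrix. If there exists a strictly positive vector x > 0 such that Ax ≥ 0 componentwise, then A is a P₀-matrix (all principal minors nonnegative). -/
open Matrix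

/-- A Z-matrix with `Bx > 0` for some `x > 0` is nonsingular. -/
lemma zmat_det_ne_zero {ι : Type*} [Fintype ι] [DecidableEq ι]
    (B : Matrix ι ι ℝ) (hB : ∀ i j, i ≠ j → B i j ≤ 0)
    (x : ι → ℝ) (hx : ∀ i, 0 < x i) (hBx : ∀ i, 0 < B.mulVec x i) : B.det ≠ 0 := by
  intro hdet
  obtain ⟨v, hv0, hv⟩ := (Matrix.exists_mulVec_eq_zero_iff).2 hdet
  obtain ⟨k, hk⟩ := Function.ne_iff.1 hv0
  have : Nonempty ι := ⟨k⟩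
  obtain ⟨i, -, hi⟩ := Finset.exists_max_image Finset.univ (fun j => |v j| / x j)
    Finset.univ_nonempty
  set t : ℝ := |v i| / x i with ht
  have htpos : 0 < t := by
    have h1 : 0 < |v k| / x k := div_pos (abs_pos.2 hk) (hx k)
    exact lt_of_lt_of_le h1 (hi k (Finset.mem_univ k))
  set u : ι → ℝ := if 0 ≤ v i then v else -v with hu
  have hBu : B.mulVec u = 0 := by
    rw [hu]; split
    · exact hv
    · rw [Matrix.mulVec_neg, hv, neg_zero]
  have hui : u i = t * x i := by
    have h : t * x i = |v i| := div_mul_cancel₀ _ (hx i).ne'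
    rw [h, hu]
    by_cases hvi : 0 ≤ v i
    · simp [hvi, abs_of_nonneg hvi]
    · simp [hvi, abs_of_neg (lt_of_not_ge hvi)]
  have huj : ∀ j, u j ≤ t * x j := by
    intro j
    have h1 : |v j| / x j ≤ t := hi j (Finset.mem_univ j)
    have h2 : |v j| ≤ t * x j := (div_le_iff₀ (hx j)).1 h1
    have h3 : u j ≤ |v j| := by
      rw [hu]
      by_cases hvi : 0 ≤ v i
      · simp only [if_pos hvi]; exact le_abs_self _
      · simp only [if_neg hvi, Pi.neg_apply]; exact neg_le_abs (v j)
    linarith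
  have key : ∀ j, t * (B i j * x j) ≤ B i j * u j := by
    intro j
    rcases eq_or_ne j i with rfl | hj
    · rw [hui]; ring_nf; exact le_refl _
    · have := mul_le_mul_of_nonpos_left (huj j) (hB i j (Ne.symm hj))
      nlinarith [this]
  have hsum : t * B.mulVec x i ≤ B.mulVec u i := by
    simp only [Matrix.mulVec, dotProduct, Finset.mul_sum]
    exact Finset.sum_le_sum fun j _ => key j
  rw [hBu] at hsum
  have : 0 < t * B.mulVec x i := mul_pos htpos (hBx i)
  simp only [Pi.zero_apply] at hsum
  linarith

/-- A Z-matrix with `Bx > 0` for some `x > 0` has positive determinant. -/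
lemma zmat_det_pos {ι : Type*} [Fintype ι] [DecidableEq ι]
    (B : Matrix ι ι ℝ) (hB : ∀ i j, i ≠ j → B i j ≤ 0)
    (x : ι → ℝ) (hx : ∀ i, 0 < x i) (hBx : ∀ i, 0 < B.mulVec x i) : 0 < B.det := by
  set M : ℝ → Matrix ι ι ℝ := fun t => Matrix.of fun i j => if i = j then B i j else t * B i j
    with hM
  have hdiag : ∀ i, 0 < B i i := by
    intro i
    have h1 : B.mulVec x i = B i i * x i + ∑ j ∈ Finset.univ.erase i, B i j * x j := by
      simp only [Matrix.mulVec, dotProduct]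
      rw [← Finset.add_sum_erase _ _ (Finset.mem_univ i)]
    have h2 : ∑ j ∈ Finset.univ.erase i, B i j * x j ≤ 0 := by
      apply Finset.sum_nonpos
      intro j hj
      exact mul_nonpos_of_nonpos_of_nonneg (hB i j (Finset.ne_of_mem_erase hj).symm) (hx j).le
    have h3 : 0 < B i i * x i := by have := hBx i; linarith
    by_contra hc
    push_neg at hc
    nlinarith [hx i]
  have hMprop : ∀ t ∈ Set.Icc (0:ℝ) 1, (M t).det ≠ 0 := by
    intro t ht
    apply zmat_det_ne_zero (M t) _ x hx
    · intro i
      have hle : B.mulVec x i ≤ (M t).mulVec x i := by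
        simp only [Matrix.mulVec, dotProduct]
        apply Finset.sum_le_sum
        intro j _
        by_cases hij : i = j
        · simp [hM, hij]
        · have h1 : B i j * x j ≤ 0 :=
            mul_nonpos_of_nonpos_of_nonneg (hB i j hij) (hx j).le
          have h2 : 1 * (B i j * x j) ≤ t * (B i j * x j) :=
            mul_le_mul_of_nonpos_right ht.2 h1
          simp only [hM, Matrix.of_apply, if_neg hij]
          nlinarith
      exact lt_of_lt_of_le (hBx i) hle
    · intro i j hij
      simp only [hM, Matrix.of_apply, if_neg hij]
      exact mul_nonpos_of_nonneg_of_nonpos ht.1 (hB i j hij)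
  have hcont : Continuous fun t => (M t).det := by
    apply Continuous.matrix_det
    apply continuous_matrix
    intro i j
    by_cases hij : i = j <;> simp only [hM, Matrix.of_apply, hij, if_true, if_neg] <;>
      first | exact continuous_const | exact (continuous_id.mul continuous_const)
  have hM0 : M 0 = Matrix.diagonal fun i => B i i := by
    ext i j
    by_cases hij : i = j <;> simp [hM, Matrix.diagonal, hij]
  have hM1 : M 1 = B := by
    ext i j
    by_cases hij : i = j <;> simp [hM, hij]
  have hf0 : 0 < (M 0).det := by
    rw [hM0, Matrix.det_diagonal]
    exact Finset.prod_pos fun i _ => hdiag i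
  by_contra hle
  push_neg at hle
  have hne : B.det ≠ 0 := zmat_det_ne_zero B hB x hx hBx
  have hf1 : (M 1).det < 0 := by rw [hM1]; exact lt_of_le_of_ne hle hne
  have hivt := intermediate_value_Icc' (by norm_num : (0:ℝ) ≤ 1)
    (hcont.continuousOn : ContinuousOn (fun t => (M t).det) (Set.Icc 0 1))
  have h0mem : (0:ℝ) ∈ Set.Icc ((M 1).det) ((M 0).det) := ⟨hf1.le, hf0.le⟩
  obtain ⟨t, htmem, htval⟩ := hivt h0mem
  exact hMprop t htmem htval

/-- A Z-matrix with `Bx ≥ 0` for some `x > 0` has nonnegative determinant. -/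
lemma zmat_det_nonneg {ι : Type*} [Fintype ι] [DecidableEq ι]
    (B : Matrix ι ι ℝ) (hB : ∀ i j, i ≠ j → B i j ≤ 0)
    (x : ι → ℝ) (hx : ∀ i, 0 < x i) (hBx : ∀ i, 0 ≤ B.mulVec x i) : 0 ≤ B.det := by
  set f : ℝ → ℝ := fun ε => (B + ε • (1 : Matrix ι ι ℝ)).det with hf
  have hpos : ∀ ε ∈ Set.Ioi (0:ℝ), 0 < f ε := by
    intro ε hε
    apply zmat_det_pos _ _ x hx
    · intro i
      have : (B + ε • (1 : Matrix ι ι ℝ)).mulVec x i = B.mulVec x i + ε * x i := by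
        simp [Matrix.add_mulVec, Matrix.smul_mulVec, Matrix.one_mulVec]
      rw [this]
      have := hBx i
      have := mul_pos hε (hx i)
      linarith
    · intro i j hij
      simp [Matrix.add_apply, Matrix.smul_apply, Matrix.one_apply_ne hij, hB i j hij]
  have hcont : Continuous f := by
    apply Continuous.matrix_det
    apply continuous_matrix
    intro i j
    simp only [Matrix.add_apply, Matrix.smul_apply, smul_eq_mul]
    exact continuous_const.add (continuous_id.mul continuous_const)
  have htend : Filter.Tendsto f (nhdsWithin 0 (Set.Ioi 0)) (nhds (f 0)) :=
    (hcont.tendsto 0).mono_left nhdsWithin_le_nhds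
  have h0 : 0 ≤ f 0 :=
    ge_of_tendsto htend (Filter.eventually_of_mem self_mem_nhdsWithin
      fun ε hε => (hpos ε hε).le)
  simpa [hf] using h0

theorem Z_pos_vec_P0 {n : ℕ} (A : Matrix (Fin n) (Fin n) ℝ) (hA : IsZMatrix A)
    (x : Fin n → ℝ) (hx : ∀ i, 0 < x i) (hAx : ∀ i, 0 ≤ A.mulVec x i) :
    ∀ α : Finset (Fin n), 0 ≤ principalMinor A α := by
  intro α
  set B := A.submatrix (fun i : {x // x ∈ α} => (i : Fin n))
    (fun j : {x // x ∈ α} => (j : Fin n)) with hBdef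
  apply zmat_det_nonneg B _ (fun i => x i) (fun i => hx i)
  · intro i
    have hsub : B.mulVec (fun j : {x // x ∈ α} => x j) i
        = ∑ j ∈ α, A i j * x j := by
      simp only [Matrix.mulVec, dotProduct, hBdef, Matrix.submatrix_apply]
      rw [← Finset.sum_coe_sort α (fun j => A i j * x j)]
    have hfull : A.mulVec x (i : Fin n)
        = ∑ j ∈ Finset.univ \ α, A i j * x j + ∑ j ∈ α, A i j * x j := by
      simp only [Matrix.mulVec, dotProduct]
      rw [Finset.sum_sdiff (Finset.subset_univ α)]
    have hneg : ∑ j ∈ Finset.univ \ α, A (i : Fin n) j * x j ≤ 0 := by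
      apply Finset.sum_nonpos
      intro j hj
      have hji : j ≠ (i : Fin n) := by
        intro h; subst h
        exact (Finset.mem_sdiff.1 hj).2 i.2
      exact mul_nonpos_of_nonpos_of_nonneg (hA i j (Ne.symm hji)) (hx j).le
    rw [hsub]
    have := hAx i
    rw [hfull] at this
    linarith
  · intro i j hij
    simp only [hBdef, Matrix.submatrix_apply]
    exact hA i j (fun h => hij (Subtype.ext h))
end

section
/- Every positive type D matrix is a P-matrix. That is, if A ∈ ℝ^{n×n} has entries a_{ij} = α_{min(i,j)} for real numbers 0 < α₁ < α₂ < ⋯ < α_n, then all principal minors of A are positive. -/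
open Matrix

private lemma tel (f : ℕ → ℝ) (p : ℕ) :
    ∑ k ∈ Finset.range (p + 1), (if k = 0 then f 0 else f k - f (k - 1)) = f p := by
  induction p with
  | zero => simp
  | succ p ih => rw [Finset.sum_range_succ, ih]; simp

private def lowerOnes (N : ℕ) : Matrix (Fin N) (Fin N) ℝ :=
  Matrix.of fun i j => if j ≤ i then 1 else 0

private lemma lowerOnes_det (N : ℕ) : (lowerOnes N).det = 1 := by
  rw [Matrix.det_of_lowerTriangular (lowerOnes N) ?ht]
  · simp [lowerOnes]
  · intro i j hij
    have h : i < j := hij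
    simp [lowerOnes, not_le.mpr h]

private lemma lowerOnes_entry (N : ℕ) (d : Fin N → ℝ) (i j : Fin N) :
    (lowerOnes N * Matrix.diagonal d * (lowerOnes N)ᵀ) i j
      = ∑ x : Fin N, if x ≤ i ∧ x ≤ j then d x else 0 := by
  have h1 : ∀ a x : Fin N, (lowerOnes N * Matrix.diagonal d) a x = if x ≤ a then d x else 0 := by
    intro a x
    rw [Matrix.mul_diagonal]
    simp only [lowerOnes, Matrix.of_apply, ite_mul, one_mul, zero_mul]
  rw [Matrix.mul_apply]
  simp only [h1, Matrix.transpose_apply, lowerOnes, Matrix.of_apply]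
  refine Finset.sum_congr rfl fun x _ => ?_
  by_cases hxi : x ≤ i <;> by_cases hxj : x ≤ j <;> simp [hxi, hxj]

theorem typeD_det_pos {N : ℕ} (α : Fin N → ℝ) (hpos : ∀ i, 0 < α i)
    (hmono : StrictMono α) : 0 < (Matrix.of fun i j : Fin N => α (min i j)).det := by
  cases N with
  | zero => simp [Matrix.det_fin_zero]
  | succ m =>
    let f : ℕ → ℝ := fun k => α ⟨min k m, by omega⟩
    let D : ℕ → ℝ := fun k => if k = 0 then f 0 else f k - f (k - 1)
    let d : Fin (m + 1) → ℝ := fun k => D k.val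
    have hdpos : ∀ k : Fin (m + 1), 0 < d k := by
      intro k
      rcases Nat.eq_zero_or_pos k.val with h0 | h0
      · show 0 < D k.val
        rw [h0]
        exact hpos _
      · have hne : k.val ≠ 0 := by omega
        show 0 < D k.val
        simp only [D, if_neg hne]
        have hlt : (⟨min (k.val - 1) m, by omega⟩ : Fin (m+1)) < ⟨min k.val m, by omega⟩ := by
          simp only [Fin.lt_def]; omega
        have := hmono hlt
        simp only [f]
        linarith
    have hsum : ∀ p : Fin (m+1), (∑ x : Fin (m+1), if x ≤ p then d x else 0) = α p := by
      intro p
      have h1 : (∑ x : Fin (m+1), if x ≤ p then d x else 0)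
          = ∑ k ∈ Finset.range (m+1), (if k ≤ p.val then D k else 0) := by
        rw [Finset.sum_range fun k => if k ≤ p.val then D k else 0]
        exact Finset.sum_congr rfl fun x _ => rfl
      have h2 : ∑ k ∈ Finset.range (m+1), (if k ≤ p.val then D k else 0)
          = ∑ k ∈ Finset.range (p.val+1), (if k ≤ p.val then D k else 0) := by
        refine (Finset.sum_subset ?_ ?_).symm
        · intro x hx
          simp only [Finset.mem_range] at hx ⊢
          omega
        · intro x _ hx
          simp only [Finset.mem_range, not_lt] at hx
          rw [if_neg (by omega)]
      have h3 : ∑ k ∈ Finset.range (p.val+1), (if k ≤ p.val then D k else 0)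
          = ∑ k ∈ Finset.range (p.val+1), D k := by
        refine Finset.sum_congr rfl fun x hx => ?_
        simp only [Finset.mem_range] at hx
        rw [if_pos (by omega)]
      rw [h1, h2, h3]
      have h4 := tel f p.val
      rw [h4]
      show α ⟨min p.val m, _⟩ = α p
      congr 1
      exact Fin.ext (by simp; omega)
    have hfac : (Matrix.of fun i j : Fin (m+1) => α (min i j))
        = lowerOnes (m+1) * Matrix.diagonal d * (lowerOnes (m+1))ᵀ := by
      ext i j
      rw [lowerOnes_entry, Matrix.of_apply, ← hsum (min i j)]
      exact Finset.sum_congr rfl fun x _ => if_congr le_min_iff rfl rfl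
    rw [hfac, Matrix.det_mul, Matrix.det_mul, Matrix.det_diagonal, Matrix.det_transpose,
      lowerOnes_det]
    simpa using Finset.prod_pos fun k _ => hdpos k

theorem typeD_P {n : ℕ} (α : Fin n → ℝ) (hpos : ∀ i, 0 < α i)
    (hmono : StrictMono α) (A : Matrix (Fin n) (Fin n) ℝ)
    (hA : ∀ i j, A i j = α (min i j)) :
    ∀ β : Finset (Fin n), 0 < principalMinor A β := by
  intro β
  classical
  let e := β.orderIsoOfFin rfl
  let α' : Fin β.card → ℝ := fun k => α (e k)
  have hdet : principalMinor A β
      = ((A.submatrix (fun i : {x // x ∈ β} => (i : Fin n))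
          (fun j : {x // x ∈ β} => (j : Fin n))).submatrix e e).det := by
    exact (Matrix.det_submatrix_equiv_self e.toEquiv _).symm
  rw [hdet]
  have key : ((A.submatrix (fun i : {x // x ∈ β} => (i : Fin n))
          (fun j : {x // x ∈ β} => (j : Fin n))).submatrix e e)
      = Matrix.of fun i j : Fin β.card => α' (min i j) := by
    ext i j
    simp only [Matrix.submatrix_apply, Matrix.of_apply]
    rw [hA]
    congr 1
    have hmin : ((e (min i j) : {x // x ∈ β}) : Fin n) = min ((e i : Fin n)) ((e j : Fin n)) := by
      rcases le_total i j with h | h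
      · rw [min_eq_left h, min_eq_left]
        exact Subtype.coe_le_coe.mpr (e.monotone h)
      · rw [min_eq_right h, min_eq_right]
        exact Subtype.coe_le_coe.mpr (e.monotone h)
    rw [hmin]
  rw [key]
  exact typeD_det_pos α' (fun i => hpos _)
    (fun i j hij => hmono (Subtype.coe_lt_coe.mpr (e.strictMono hij)))
end

section
/- Let A be a positive type D matrix (a_{ij} = α_{min(i,j)} with 0 < α₁ < ⋯ < α_n). Then A is nonsingular and its inverse A⁻¹ is a Z-matrix (all off-diagonal entries of A⁻¹ are nonpositive). -/
open Matrix

/-! Write `β = Δα` for the increments `β₁ = α₁`, `βₖ = αₖ - αₖ₋₁` of `α`, all positive, and `L` for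
the lower-triangular all-ones matrix, the inverse of the backward-difference matrix `Δ`. Then
`A = L · diag β · Lᵀ`, so `A⁻¹ = Δᵀ · diag β⁻¹ · Δ`. Two distinct columns of `Δ` never carry
nonzero entries of equal sign in the same row, so every off-diagonal entry of `A⁻¹` is a sum of
nonpositive terms. -/

/-- `(backwardDiffMatrix n *ᵥ f) k = f k - f (k - 1)`, where `f (-1) = 0`. -/
def backwardDiffMatrix (n : ℕ) : Matrix (Fin n) (Fin n) ℝ :=
  of fun k i => if i = k then 1 else if (i : ℕ) + 1 = k then -1 else 0

def partialSumMatrix (n : ℕ) : Matrix (Fin n) (Fin n) ℝ :=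
  of fun i k => if k ≤ i then 1 else 0

def typeDMatrix {n : ℕ} (α : Fin n → ℝ) : Matrix (Fin n) (Fin n) ℝ :=
  of fun i j => α (min i j)

section BackwardDiff

variable {n : ℕ}

lemma Fin.val_eq_zero_or_exists_val_succ_eq (k : Fin n) :
    (k : ℕ) = 0 ∨ ∃ p : Fin n, (p : ℕ) + 1 = k := by
  rcases Nat.eq_zero_or_eq_succ_pred (k : ℕ) with hk | hk
  · exact .inl hk
  · exact .inr ⟨⟨(k : ℕ) - 1, by omega⟩, by simp only; omega⟩

lemma backwardDiffMatrix_mulVec_of_val_eq_zero (f : Fin n → ℝ) {k : Fin n} (hk : (k : ℕ) = 0) :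
    (backwardDiffMatrix n *ᵥ f) k = f k := by
  have hshift : ∀ i : Fin n, (i : ℕ) + 1 ≠ k := fun i => by omega
  simp [backwardDiffMatrix, mulVec, dotProduct, ite_mul, hshift]

lemma backwardDiffMatrix_mulVec_of_succ_eq (f : Fin n → ℝ) {p k : Fin n}
    (hpk : (p : ℕ) + 1 = k) : (backwardDiffMatrix n *ᵥ f) k = f k - f p := by
  have hshift : ∀ i : Fin n, ((i : ℕ) + 1 = k ↔ i = p) := fun i => by
    rw [Fin.ext_iff]; omega
  have hpk' : p ≠ k := by rw [Ne, Fin.ext_iff]; omega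
  have hsplit : ∀ i, (if i = k then (1 : ℝ) else if i = p then -1 else 0) * f i
      = (if i = k then f i else 0) - (if i = p then f i else 0) := fun i => by
    split_ifs <;> simp_all
  simp only [backwardDiffMatrix, mulVec, dotProduct, of_apply, hshift, hsplit,
    Finset.sum_sub_distrib, Finset.sum_ite_eq', Finset.mem_univ, if_true]

lemma backwardDiffMatrix_mul_partialSumMatrix :
    backwardDiffMatrix n * partialSumMatrix n = 1 := by
  ext k j
  change (backwardDiffMatrix n *ᵥ fun i => partialSumMatrix n i j) k = _
  obtain hk | ⟨p, hpk⟩ := Fin.val_eq_zero_or_exists_val_succ_eq k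
  · rw [backwardDiffMatrix_mulVec_of_val_eq_zero _ hk]
    simp only [partialSumMatrix, of_apply, one_apply, Fin.le_def, Fin.ext_iff]
    split_ifs <;> first | rfl | (exfalso; omega)
  · rw [backwardDiffMatrix_mulVec_of_succ_eq _ hpk]
    simp only [partialSumMatrix, of_apply, one_apply, Fin.le_def, Fin.ext_iff]
    split_ifs <;> first | (exfalso; omega) | norm_num

lemma backwardDiffMatrix_mul_mul_nonpos (k : Fin n) {i j : Fin n} (hij : i ≠ j) :
    backwardDiffMatrix n k i * backwardDiffMatrix n k j ≤ 0 := by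
  rw [Ne, Fin.ext_iff] at hij
  simp only [backwardDiffMatrix, of_apply, Fin.ext_iff]
  split_ifs <;> first | (exfalso; omega) | norm_num

end BackwardDiff

lemma isZMatrix_transpose_mul_diagonal_mul {ι κ : Type*} [Fintype ι] [DecidableEq ι]
    [Fintype κ] [DecidableEq κ] (E : Matrix κ ι ℝ) {d : κ → ℝ} (hd : ∀ k, 0 ≤ d k)
    (hE : ∀ k {i j}, i ≠ j → E k i * E k j ≤ 0) : IsZMatrix (Eᵀ * diagonal d * E) := by
  intro i j hij
  rw [mul_apply]
  refine Finset.sum_nonpos fun k _ => ?_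
  rw [mul_diagonal, transpose_apply, mul_right_comm]
  exact mul_nonpos_of_nonpos_of_nonneg (hE k hij) (hd k)

section TypeD

variable {n : ℕ} (α : Fin n → ℝ)

lemma typeDMatrix_mul_transpose_backwardDiffMatrix :
    typeDMatrix α * (backwardDiffMatrix n)ᵀ
      = partialSumMatrix n * diagonal (backwardDiffMatrix n *ᵥ α) := by
  ext i k
  rw [mul_diagonal]
  have hentry : (typeDMatrix α * (backwardDiffMatrix n)ᵀ) i k
      = (backwardDiffMatrix n *ᵥ fun j => α (min i j)) k := by
    simp only [mul_apply, mulVec, dotProduct, transpose_apply, typeDMatrix, of_apply, mul_comm]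
  rw [hentry]
  obtain hk | ⟨p, hpk⟩ := Fin.val_eq_zero_or_exists_val_succ_eq k
  · have hki : k ≤ i := by rw [Fin.le_def]; omega
    simp [backwardDiffMatrix_mulVec_of_val_eq_zero _ hk, partialSumMatrix, hki]
  · rw [backwardDiffMatrix_mulVec_of_succ_eq _ hpk, backwardDiffMatrix_mulVec_of_succ_eq _ hpk]
    by_cases hki : k ≤ i
    · have hpi : p ≤ i := by rw [Fin.le_def] at hki ⊢; omega
      simp [partialSumMatrix, hki, hpi]
    · have hpi : i ≤ p := by rw [Fin.le_def] at hki ⊢; omega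
      simp [partialSumMatrix, hki, hpi, (not_le.mp hki).le]

lemma backwardDiffMatrix_mulVec_pos (hpos : ∀ i, 0 < α i) (hmono : StrictMono α) (k : Fin n) :
    0 < (backwardDiffMatrix n *ᵥ α) k := by
  obtain hk | ⟨p, hpk⟩ := Fin.val_eq_zero_or_exists_val_succ_eq k
  · rw [backwardDiffMatrix_mulVec_of_val_eq_zero _ hk]
    exact hpos k
  · rw [backwardDiffMatrix_mulVec_of_succ_eq _ hpk, sub_pos]
    exact hmono (by rw [Fin.lt_def]; omega)

lemma typeDMatrix_mul_eq_one (hβ : ∀ k, (backwardDiffMatrix n *ᵥ α) k ≠ 0) :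
    typeDMatrix α * ((backwardDiffMatrix n)ᵀ * diagonal (backwardDiffMatrix n *ᵥ α)⁻¹
      * backwardDiffMatrix n) = 1 := by
  set Δ := backwardDiffMatrix n
  set β := Δ *ᵥ α
  have hdiag : diagonal β * diagonal β⁻¹ = 1 := by
    rw [diagonal_mul_diagonal, ← diagonal_one]
    exact congrArg diagonal (funext fun k => mul_inv_cancel₀ (hβ k))
  calc typeDMatrix α * (Δᵀ * diagonal β⁻¹ * Δ)
      = typeDMatrix α * Δᵀ * diagonal β⁻¹ * Δ := by simp only [Matrix.mul_assoc]
    _ = partialSumMatrix n * (diagonal β * diagonal β⁻¹) * Δ := by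
        rw [typeDMatrix_mul_transpose_backwardDiffMatrix, Matrix.mul_assoc (partialSumMatrix n)]
    _ = 1 := by
        rw [hdiag, Matrix.mul_one, mul_eq_one_comm]
        exact backwardDiffMatrix_mul_partialSumMatrix

end TypeD

theorem typeD_inv_Z {n : ℕ} (α : Fin n → ℝ) (hpos : ∀ i, 0 < α i)
    (hmono : StrictMono α) (A : Matrix (Fin n) (Fin n) ℝ)
    (hA : ∀ i j, A i j = α (min i j)) :
    A.det ≠ 0 ∧ IsZMatrix A⁻¹ := by
  obtain rfl : A = typeDMatrix α := Matrix.ext hA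
  have hβ := backwardDiffMatrix_mulVec_pos α hpos hmono
  have hinv := typeDMatrix_mul_eq_one α fun k => (hβ k).ne'
  refine ⟨(isUnit_det_of_right_inverse hinv).ne_zero, ?_⟩
  rw [inv_eq_right_inv hinv]
  exact isZMatrix_transpose_mul_diagonal_mul _ (fun k => inv_nonneg.mpr (hβ k).le)
    fun k => backwardDiffMatrix_mul_mul_nonpos k
end

section
/- If A ∈ ℝ^{n×n} is an almost P-matrix (all proper principal minors positive, det A < 0), then A is invertible and A⁻¹ is an N-matrix (all principal minors of A⁻¹ are negative). -/
open Matrix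

lemma jacobi_minor {n : ℕ} (A : Matrix (Fin n) (Fin n) ℝ) (α : Finset (Fin n))
    (hA : A.det ≠ 0) (hD : principalMinor A αᶜ ≠ 0) :
    principalMinor A⁻¹ α = principalMinor A αᶜ / A.det := by
  classical
  set p : Fin n → Prop := fun x => x ∈ α with hp
  have : DecidablePred p := fun x => inferInstanceAs (Decidable (x ∈ α))
  let e : {x // p x} ⊕ {x // ¬ p x} ≃ Fin n := Equiv.sumCompl p
  let P : Matrix {x // p x} {x // p x} ℝ := of fun i j => A i j
  let Q : Matrix {x // p x} {x // ¬ p x} ℝ := of fun i j => A i j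
  let R : Matrix {x // ¬ p x} {x // p x} ℝ := of fun i j => A i j
  let D : Matrix {x // ¬ p x} {x // ¬ p x} ℝ := of fun i j => A i j
  have hM : A.submatrix e e = fromBlocks P Q R D := by
    ext i j; cases i <;> cases j <;> rfl
  let e2 : {x : Fin n // x ∈ αᶜ} ≃ {x // ¬ p x} :=
    Equiv.subtypeEquivRight (fun x => by simp [hp])
  have hDdet : D.det = principalMinor A αᶜ := by
    rw [principalMinor, ← Matrix.det_submatrix_equiv_self e2]
    congr 1
  have hDdet' : D.det ≠ 0 := by rw [hDdet]; exact hD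
  haveI : Invertible D := D.invertibleOfIsUnitDet (isUnit_iff_ne_zero.mpr hDdet')
  have hdetM : (fromBlocks P Q R D).det = A.det := by
    rw [← hM, Matrix.det_submatrix_equiv_self]
  have hSchur : (fromBlocks P Q R D).det = D.det * (P - Q * ⅟D * R).det :=
    det_fromBlocks₂₂ P Q R D
  have hSdet : (P - Q * ⅟D * R).det = A.det / D.det := by
    rw [eq_div_iff hDdet', mul_comm, ← hSchur]
    exact hdetM
  have hSne : (P - Q * ⅟D * R).det ≠ 0 := by
    rw [hSdet]; exact div_ne_zero hA hDdet'
  haveI : Invertible (P - Q * ⅟D * R) :=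
    Matrix.invertibleOfIsUnitDet _ (isUnit_iff_ne_zero.mpr hSne)
  haveI : Invertible (fromBlocks P Q R D) :=
    Matrix.invertibleOfIsUnitDet _ (by rw [hdetM]; exact isUnit_iff_ne_zero.mpr hA)
  have hinvM : A⁻¹.submatrix e e = ⅟(fromBlocks P Q R D) := by
    rw [← Matrix.inv_submatrix_equiv, hM, Matrix.invOf_eq_nonsing_inv]
  have hblock : ⅟(fromBlocks P Q R D) =
      fromBlocks (⅟ (P - Q * ⅟ D * R)) (-(⅟ (P - Q * ⅟ D * R) * Q * ⅟ D))
        (-(⅟ D * R * ⅟ (P - Q * ⅟ D * R))) (⅟ D + ⅟ D * R * ⅟ (P - Q * ⅟ D * R) * Q * ⅟ D) :=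
    invOf_fromBlocks₂₂_eq P Q R D
  have hsub : (A⁻¹.submatrix (fun i : {x // x ∈ α} => (i : Fin n))
      (fun j : {x // x ∈ α} => (j : Fin n))) = ⅟ (P - Q * ⅟ D * R) := by
    ext i j
    have : A⁻¹ (i : Fin n) (j : Fin n) = (A⁻¹.submatrix e e) (Sum.inl i) (Sum.inl j) := rfl
    rw [Matrix.submatrix_apply, this, hinvM, hblock]
    rfl
  rw [principalMinor, hsub, Matrix.invOf_eq_nonsing_inv, Matrix.det_nonsing_inv,
    Ring.inverse_eq_inv', hSdet, inv_div, hDdet]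

theorem almostP_inv_N {n : ℕ} (A : Matrix (Fin n) (Fin n) ℝ)
    (hproper : ∀ β : Finset (Fin n), β ≠ Finset.univ → 0 < principalMinor A β)
    (hdet : A.det < 0) :
    IsUnit A.det ∧ ∀ β : Finset (Fin n), β.Nonempty → principalMinor A⁻¹ β < 0 := by
  have hA : A.det ≠ 0 := ne_of_lt hdet
  refine ⟨isUnit_iff_ne_zero.mpr hA, fun β hβ => ?_⟩
  have hcompl : βᶜ ≠ Finset.univ := by
    obtain ⟨x, hx⟩ := hβ
    intro h
    have : x ∈ βᶜ := h ▸ Finset.mem_univ x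
    exact (Finset.mem_compl.mp this) hx
  have hpos := hproper βᶜ hcompl
  rw [jacobi_minor A β hA (ne_of_gt hpos)]
  exact div_neg_of_pos_of_neg hpos hdet
end
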